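/- Avoiding battery overflow is without loss of optimality in the finite-battery two-way channel: the supremum of the sum-throughput over all policies feasible under the clipped battery dynamics (where battery states are truncated at capacity, so energy exceeding E_k^max overflows and is lost) equals the supremum of the sum-throughput over all policies feasible under the hard-constraint dynamics (where the untruncated battery states are required to stay between 0 and E_k^max). -/
import Mathlib


/-- Battery state of a node under the clipped dynamics: `clippedState Emax α E p d d' i`
is the energy stored at the start of slot `i` (after slots `0,…,i-1`), where the
node harvests `E`, transmits with power `p`, transfers `d`, and receives the
other node's transfers `d'` with efficiency `α`; energy exceeding the capacity
`Emax` overflows and is lost. -/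
noncomputable def clippedState (Emax α : ℝ) (E p d d' : ℕ → ℝ) : ℕ → ℝ
  | 0 => 0
  | i + 1 => min Emax (clippedState Emax α E p d d' i + E i - p i - d i + α * d' i)

lemma clippedState_zero (Emax α : ℝ) (E p d d' : ℕ → ℝ) :
    clippedState Emax α E p d d' 0 = 0 := rfl

lemma clippedState_succ (Emax α : ℝ) (E p d d' : ℕ → ℝ) (i : ℕ) :
    clippedState Emax α E p d d' (i+1)
      = min Emax (clippedState Emax α E p d d' i + E i - p i - d i + α * d' i) := rfl

/-- Under the hard constraints, the clipped state equals the untruncated sum. -/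
lemma clip_eq_sum (N : ℕ) (Em α : ℝ) (E p d d' : ℕ → ℝ)
    (h : ∀ i < N, ∑ n ∈ Finset.range (i+1), (E n - p n + α * d' n - d n) ≤ Em) :
    ∀ i, i ≤ N → clippedState Em α E p d d' i
      = ∑ n ∈ Finset.range i, (E n - p n + α * d' n - d n) := by
  intro i
  induction i with
  | zero => intro _; simp [clippedState_zero]
  | succ i ih =>
    intro hi
    have hiN : i < N := hi
    rw [clippedState_succ, ih (Nat.le_of_lt hiN)]
    have harr : (∑ n ∈ Finset.range i, (E n - p n + α * d' n - d n))
        + E i - p i - d i + α * d' i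
        = ∑ n ∈ Finset.range (i+1), (E n - p n + α * d' n - d n) := by
      rw [Finset.sum_range_succ]; ring
    rw [harr, min_eq_right (h i hiN)]

/-- The overflow-burning power: add the lost overflow to the transmit power. -/
noncomputable def fixp (Em α : ℝ) (E p d d' : ℕ → ℝ) (i : ℕ) : ℝ :=
  p i + (clippedState Em α E p d d' i + E i - p i - d i + α * d' i
         - clippedState Em α E p d d' (i+1))

lemma le_fixp (Em α : ℝ) (E p d d' : ℕ → ℝ) (i : ℕ) :
    p i ≤ fixp Em α E p d d' i := by
  have h := min_le_right Em
    (clippedState Em α E p d d' i + E i - p i - d i + α * d' i)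
  rw [fixp, ← clippedState_succ] at *
  linarith

lemma fixp_sum (Em α : ℝ) (E p d d' : ℕ → ℝ) (i : ℕ) :
    ∑ n ∈ Finset.range (i+1), (E n - fixp Em α E p d d' n + α * d' n - d n)
      = clippedState Em α E p d d' (i+1) := by
  have key : ∀ n, E n - fixp Em α E p d d' n + α * d' n - d n
      = clippedState Em α E p d d' (n+1) - clippedState Em α E p d d' n := by
    intro n; rw [fixp]; ring
  calc ∑ n ∈ Finset.range (i+1), (E n - fixp Em α E p d d' n + α * d' n - d n)
      = ∑ n ∈ Finset.range (i+1),
          (clippedState Em α E p d d' (n+1) - clippedState Em α E p d d' n) := by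
        exact Finset.sum_congr rfl fun n _ => key n
    _ = clippedState Em α E p d d' (i+1) - clippedState Em α E p d d' 0 :=
        Finset.sum_range_sub _ _
    _ = clippedState Em α E p d d' (i+1) := by rw [clippedState_zero]; ring

/-- For the finite-battery two-way channel, the optimal
sum-throughput under the clipped battery dynamics (battery overflows allowed)
equals the optimal sum-throughput under the hard-constraint dynamics (battery
states required to stay between 0 and capacity). -/
theorem stmt_13
    (N : ℕ) (E1 E2 : ℕ → ℝ) (Em1 Em2 h1 h2 s1 s2 a1 a2 : ℝ)
    (hEm1 : 0 < Em1) (hEm2 : 0 < Em2)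
    (hh1 : 0 < h1) (hh2 : 0 < h2) (hs1 : 0 < s1) (hs2 : 0 < s2)
    (ha1 : a1 ∈ Set.Icc (0:ℝ) 1) (ha2 : a2 ∈ Set.Icc (0:ℝ) 1)
    (hE : ∀ i < N, 0 ≤ E1 i ∧ 0 ≤ E2 i) :
    sSup {t : ℝ | ∃ p1 p2 d1 d2 : ℕ → ℝ,
        (∀ i < N, 0 ≤ p1 i ∧ 0 ≤ p2 i ∧ 0 ≤ d1 i ∧ 0 ≤ d2 i) ∧
        -- clipped-feasible
        (∀ i < N,
          p1 i + d1 i ≤ clippedState Em1 a2 E1 p1 d1 d2 i + E1 i + a2 * d2 i ∧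
          p2 i + d2 i ≤ clippedState Em2 a1 E2 p2 d2 d1 i + E2 i + a1 * d1 i) ∧
        t = ∑ i ∈ Finset.range N,
          (1/2 * Real.log (1 + h1 * p1 i / s2)
            + 1/2 * Real.log (1 + h2 * p2 i / s1))}
    = sSup {t : ℝ | ∃ p1 p2 d1 d2 : ℕ → ℝ,
        (∀ i < N, 0 ≤ p1 i ∧ 0 ≤ p2 i ∧ 0 ≤ d1 i ∧ 0 ≤ d2 i) ∧
        -- hard-feasible
        (∀ i < N,
          (0 ≤ ∑ n ∈ Finset.range (i+1), (E1 n - p1 n + a2 * d2 n - d1 n) ∧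
            ∑ n ∈ Finset.range (i+1), (E1 n - p1 n + a2 * d2 n - d1 n) ≤ Em1) ∧
          (0 ≤ ∑ n ∈ Finset.range (i+1), (E2 n - p2 n + a1 * d1 n - d2 n) ∧
            ∑ n ∈ Finset.range (i+1), (E2 n - p2 n + a1 * d1 n - d2 n) ≤ Em2)) ∧
        t = ∑ i ∈ Finset.range N,
          (1/2 * Real.log (1 + h1 * p1 i / s2)
            + 1/2 * Real.log (1 + h2 * p2 i / s1))} := by
  set A := {t : ℝ | ∃ p1 p2 d1 d2 : ℕ → ℝ,
        (∀ i < N, 0 ≤ p1 i ∧ 0 ≤ p2 i ∧ 0 ≤ d1 i ∧ 0 ≤ d2 i) ∧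
        (∀ i < N,
          p1 i + d1 i ≤ clippedState Em1 a2 E1 p1 d1 d2 i + E1 i + a2 * d2 i ∧
          p2 i + d2 i ≤ clippedState Em2 a1 E2 p2 d2 d1 i + E2 i + a1 * d1 i) ∧
        t = ∑ i ∈ Finset.range N,
          (1/2 * Real.log (1 + h1 * p1 i / s2)
            + 1/2 * Real.log (1 + h2 * p2 i / s1))} with hA
  set B := {t : ℝ | ∃ p1 p2 d1 d2 : ℕ → ℝ,
        (∀ i < N, 0 ≤ p1 i ∧ 0 ≤ p2 i ∧ 0 ≤ d1 i ∧ 0 ≤ d2 i) ∧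
        (∀ i < N,
          (0 ≤ ∑ n ∈ Finset.range (i+1), (E1 n - p1 n + a2 * d2 n - d1 n) ∧
            ∑ n ∈ Finset.range (i+1), (E1 n - p1 n + a2 * d2 n - d1 n) ≤ Em1) ∧
          (0 ≤ ∑ n ∈ Finset.range (i+1), (E2 n - p2 n + a1 * d1 n - d2 n) ∧
            ∑ n ∈ Finset.range (i+1), (E2 n - p2 n + a1 * d1 n - d2 n) ≤ Em2)) ∧
        t = ∑ i ∈ Finset.range N,
          (1/2 * Real.log (1 + h1 * p1 i / s2)
            + 1/2 * Real.log (1 + h2 * p2 i / s1))} with hB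
  -- B ⊆ A : hard-feasible implies clipped-feasible with the same throughput
  have hBA : B ⊆ A := by
    rintro t ⟨p1, p2, d1, d2, hnn, hfeas, ht⟩
    refine ⟨p1, p2, d1, d2, hnn, ?_, ht⟩
    have hc1 := clip_eq_sum N Em1 a2 E1 p1 d1 d2 (fun i hi => (hfeas i hi).1.2)
    have hc2 := clip_eq_sum N Em2 a1 E2 p2 d2 d1 (fun i hi => (hfeas i hi).2.2)
    intro i hi
    have h1' := (hfeas i hi).1.1
    have h2' := (hfeas i hi).2.1
    rw [Finset.sum_range_succ] at h1' h2'
    constructor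
    · rw [hc1 i (Nat.le_of_lt hi)]; linarith
    · rw [hc2 i (Nat.le_of_lt hi)]; linarith
  -- domination: every clipped throughput is dominated by some hard throughput
  have hdom : ∀ t ∈ A, ∃ t' ∈ B, t ≤ t' := by
    rintro t ⟨p1, p2, d1, d2, hnn, hfeas, ht⟩
    set q1 := fixp Em1 a2 E1 p1 d1 d2 with hq1
    set q2 := fixp Em2 a1 E2 p2 d2 d1 with hq2
    refine ⟨∑ i ∈ Finset.range N,
          (1/2 * Real.log (1 + h1 * q1 i / s2)
            + 1/2 * Real.log (1 + h2 * q2 i / s1)), ?_, ?_⟩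
    · refine ⟨q1, q2, d1, d2, ?_, ?_, rfl⟩
      · intro i hi
        obtain ⟨hp1, hp2, hd1, hd2⟩ := hnn i hi
        exact ⟨le_trans hp1 (le_fixp _ _ _ _ _ _ i),
          le_trans hp2 (le_fixp _ _ _ _ _ _ i), hd1, hd2⟩
      · intro i hi
        have e1 := fixp_sum Em1 a2 E1 p1 d1 d2 i
        have e2 := fixp_sum Em2 a1 E2 p2 d2 d1 i
        rw [← hq1] at e1
        rw [← hq2] at e2
        have hf1 := (hfeas i hi).1
        have hf2 := (hfeas i hi).2
        have hS1 : 0 ≤ clippedState Em1 a2 E1 p1 d1 d2 (i+1) := by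
          rw [clippedState_succ]
          exact le_min (le_of_lt hEm1) (by linarith)
        have hS2 : 0 ≤ clippedState Em2 a1 E2 p2 d2 d1 (i+1) := by
          rw [clippedState_succ]
          exact le_min (le_of_lt hEm2) (by linarith)
        have hU1 : clippedState Em1 a2 E1 p1 d1 d2 (i+1) ≤ Em1 := by
          rw [clippedState_succ]; exact min_le_left _ _
        have hU2 : clippedState Em2 a1 E2 p2 d2 d1 (i+1) ≤ Em2 := by
          rw [clippedState_succ]; exact min_le_left _ _
        rw [e1, e2]
        exact ⟨⟨hS1, hU1⟩, ⟨hS2, hU2⟩⟩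
    · rw [ht]
      apply Finset.sum_le_sum
      intro i hi
      have hiN : i < N := Finset.mem_range.mp hi
      obtain ⟨hp1, hp2, _, _⟩ := hnn i hiN
      have hq1i : p1 i ≤ q1 i := le_fixp _ _ _ _ _ _ i
      have hq2i : p2 i ≤ q2 i := le_fixp _ _ _ _ _ _ i
      have l1 : Real.log (1 + h1 * p1 i / s2) ≤ Real.log (1 + h1 * q1 i / s2) :=
        Real.log_le_log (by positivity) (by gcongr)
      have l2 : Real.log (1 + h2 * p2 i / s1) ≤ Real.log (1 + h2 * q2 i / s1) :=
        Real.log_le_log (by positivity) (by gcongr)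
      linarith
  -- conclude the equality of suprema
  by_cases hBb : BddAbove B
  · have hAb : BddAbove A := by
      obtain ⟨M, hM⟩ := hBb
      refine ⟨M, fun t ht => ?_⟩
      obtain ⟨t', ht', htt'⟩ := hdom t ht
      exact le_trans htt' (hM ht')
    rcases Set.eq_empty_or_nonempty A with hAe | hAne
    · have hBe : B = ∅ := Set.eq_empty_of_subset_empty (hAe ▸ hBA)
      rw [hAe, hBe]
    · have hBne : B.Nonempty := by
        obtain ⟨t, ht⟩ := hAne
        obtain ⟨t', ht', _⟩ := hdom t ht
        exact ⟨t', ht'⟩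
      apply le_antisymm
      · apply csSup_le hAne
        intro t ht
        obtain ⟨t', ht', htt'⟩ := hdom t ht
        exact le_trans htt' (le_csSup hBb ht')
      · exact csSup_le_csSup hAb hBne hBA
  · have hAb : ¬ BddAbove A := fun h => hBb (h.mono hBA)
    rw [Real.sSup_of_not_bddAbove hAb, Real.sSup_of_not_bddAbove hBb]
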